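/- Suppose W is symmetric, the digraph of W is strongly connected, and it is structurally balanced with gauge g for the full node set. Then for every nominal prescribed-time trajectory X with parameters ρ1, ρ2 > 0 and prescribed time T1 > 0, one has X t k = g k · ((1/N) · ∑_j g j · X 0 j) for all t ≥ T1 and all nodes k (prescribed-time signed-average consensus within the preassigned time T1). -/

import Mathlib

open Matrix

/-- Time-varying gain: `μ_T(t) = κ/(T − t)` for `0 ≤ t < T`, `0` otherwise. -/
noncomputable def gain (κ T t : ℝ) : ℝ := if 0 ≤ t ∧ t < T then κ / (T - t) else 0

/-- Signed Laplacian `L = D − W` with `D k k = ∑_l |W k l|`. -/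
noncomputable def sLap {N : ℕ} (W : Matrix (Fin N) (Fin N) ℝ) : Matrix (Fin N) (Fin N) ℝ :=
  Matrix.diagonal (fun k => ∑ l, |W k l|) - W

/-- Node `i` reaches node `j`: reflexive–transitive closure of the edge relation
`E i j ↔ W j i ≠ 0`. -/
def Reaches {N : ℕ} (W : Matrix (Fin N) (Fin N) ℝ) : Fin N → Fin N → Prop :=
  Relation.ReflTransGen (fun i j => W j i ≠ 0)

def StronglyConnected {N : ℕ} (W : Matrix (Fin N) (Fin N) ℝ) : Prop :=
  ∀ i j, Reaches W i j

def QuasiStronglyConnected {N : ℕ} (W : Matrix (Fin N) (Fin N) ℝ) : Prop :=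
  ∃ r, ∀ j, Reaches W r j

def WeaklyConnected {N : ℕ} (W : Matrix (Fin N) (Fin N) ℝ) : Prop :=
  ∀ i j, Relation.ReflTransGen (fun a b => W b a ≠ 0 ∨ W a b ≠ 0) i j

/-- `k` is a leader: every node reaching `k` is reached back by `k`. -/
def IsLeader {N : ℕ} (W : Matrix (Fin N) (Fin N) ℝ) (k : Fin N) : Prop :=
  ∀ j, Reaches W j k → Reaches W k j

/-- Closed strong component of a leader `k`. -/
def CSC {N : ℕ} (W : Matrix (Fin N) (Fin N) ℝ) (k : Fin N) : Set (Fin N) :=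
  {j | Reaches W j k ∧ Reaches W k j}

/-- A gauge for a node set `S`. -/
def IsGauge {N : ℕ} (W : Matrix (Fin N) (Fin N) ℝ) (S : Set (Fin N)) (g : Fin N → ℝ) : Prop :=
  (∀ k ∈ S, g k = 1 ∨ g k = -1) ∧ ∀ k ∈ S, ∀ l ∈ S, g k * W k l * g l = |W k l|

/-- Nominal prescribed-time trajectory of the protocol (4). -/
def NominalTraj {N : ℕ} (W : Matrix (Fin N) (Fin N) ℝ) (κ ρ1 ρ2 T1 : ℝ)
    (X : ℝ → Fin N → ℝ) : Prop :=
  Continuous X ∧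
  ∀ t : ℝ, 0 ≤ t → t ≠ T1 →
    HasDerivAt X ((-(ρ1 + ρ2 * gain κ T1 t)) • (sLap W).mulVec (X t)) t

/-! Multiplying node `k` by `g k` turns the signed protocol into the unsigned one with the
nonnegative symmetric weights `|W|`, because `g k * W k l * g l = |W k l|`. For such weights the
Laplacian has zero column sums, so the average `c` of the state is conserved, and the disagreement
`E = ∑ k, (z k - c) ^ 2` satisfies `E' = -(ρ1 + ρ2 μ) Q(z)`, where `Q` is the Laplacian energy.
Strong connectivity and compactness of the unit sphere give `λ E ≤ Q` on zero-mean vectors, so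
before `T1` we get `E' ≤ -(λ ρ2 κ / (T1 - t)) E`. Hence `E (t) (T1 - t) ^ (-λ ρ2 κ)` is
nonincreasing, `E` vanishes at `T1`, and it stays zero afterwards since `E' ≤ 0`. -/

open Set

theorem le_zero_of_hasDerivAt_le_neg_div_mul {E E' : ℝ → ℝ} {T p : ℝ} (hT : 0 < T) (hp : 0 < p)
    (hE : ContinuousOn E (Icc 0 T)) (hE' : ∀ t ∈ Ioo 0 T, HasDerivAt E (E' t) t)
    (hbound : ∀ t ∈ Ioo 0 T, E' t ≤ -(p / (T - t)) * E t) :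
    E T ≤ 0 := by
  have hanti : AntitoneOn (fun t => E t * (T - t) ^ (-p)) (Ico 0 T) := by
    refine antitoneOn_of_hasDerivWithinAt_nonpos (convex_Ico 0 T)
      (f' := fun t => E' t * (T - t) ^ (-p) + E t * (-1 * -p * (T - t) ^ (-p - 1))) ?_ ?_ ?_
    · refine (hE.mono Ico_subset_Icc_self).mul fun t ht => ?_
      have : T - t ≠ 0 := (sub_pos.2 ht.2).ne'
      exact ((continuousAt_const.sub continuousAt_id).rpow_const (Or.inl this)).continuousWithinAt
    · intro t ht
      rw [interior_Ico] at ht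
      exact ((hE' t ht).mul (((hasDerivAt_id t).const_sub T).rpow_const
        (Or.inl (sub_pos.2 ht.2).ne'))).hasDerivWithinAt
    · intro t ht
      rw [interior_Ico] at ht
      have hs : 0 < T - t := sub_pos.2 ht.2
      have hφ : 0 < (T - t) ^ (-p) := Real.rpow_pos_of_pos hs _
      have h := mul_le_mul_of_nonneg_right (hbound t ht) hφ.le
      rw [Real.rpow_sub_one hs.ne']
      calc _ ≤ -(p / (T - t)) * E t * (T - t) ^ (-p)
            + E t * (-1 * -p * ((T - t) ^ (-p) / (T - t))) := by linarith
        _ = 0 := by ring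
  have hle : ∀ t ∈ Ioo 0 T, E t ≤ E 0 * T ^ (-p) * (T - t) ^ p := by
    intro t ht
    have hs : 0 < T - t := sub_pos.2 ht.2
    have h := hanti ⟨le_rfl, hT⟩ (Ioo_subset_Ico_self ht) ht.1.le
    simp only [sub_zero] at h
    rw [Real.rpow_neg hs.le, ← div_eq_mul_inv, div_le_iff₀ (Real.rpow_pos_of_pos hs p)] at h
    exact h
  have hcont : Continuous fun t => E 0 * T ^ (-p) * (T - t) ^ p :=
    continuous_const.mul ((Real.continuous_rpow_const hp.le).comp (continuous_const.sub continuous_id))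
  have h := ContinuousWithinAt.closure_le (by rw [closure_Ioo hT.ne]; exact ⟨hT.le, le_rfl⟩)
    ((hE _ ⟨hT.le, le_rfl⟩).mono Ioo_subset_Icc_self) hcont.continuousWithinAt hle
  simpa [Real.zero_rpow hp.ne'] using h

theorem exists_pos_mul_norm_sq_le {E : Type*} [NormedAddCommGroup E] [NormedSpace ℝ E]
    [FiniteDimensional ℝ E] (V : Submodule ℝ E) {Q : E → ℝ} (hQ : Continuous Q)
    (hQ_smul : ∀ (c : ℝ) z, Q (c • z) = c ^ 2 * Q z) (hQ_pos : ∀ z ∈ V, z ≠ 0 → 0 < Q z) :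
    ∃ lam > 0, ∀ z ∈ V, lam * ‖z‖ ^ 2 ≤ Q z := by
  have hQ0 : Q 0 = 0 := by simpa using hQ_smul 0 0
  set S := (V : Set E) ∩ Metric.sphere 0 1
  have hS : IsCompact S := (isCompact_sphere 0 1).inter_left V.closed_of_finiteDimensional
  have hunit : ∀ z ∈ V, z ≠ 0 → ‖z‖⁻¹ • z ∈ S := fun z hz hz0 =>
    ⟨V.smul_mem _ hz, by simp [norm_smul, norm_ne_zero_iff.2 hz0]⟩
  rcases S.eq_empty_or_nonempty with hSe | hSne
  · refine ⟨1, one_pos, fun z hz => ?_⟩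
    obtain rfl : z = 0 := by
      by_contra hz0
      simpa [hSe] using hunit z hz hz0
    simp [hQ0]
  obtain ⟨u, ⟨huV, hu1⟩, hmin⟩ := hS.exists_isMinOn hSne hQ.continuousOn
  refine ⟨Q u, hQ_pos u huV (by rintro rfl; simp at hu1), fun z hz => ?_⟩
  rcases eq_or_ne z 0 with rfl | hz0
  · simp [hQ0]
  have hQz : Q z = ‖z‖ ^ 2 * Q (‖z‖⁻¹ • z) := by
    rw [hQ_smul, ← mul_assoc, ← mul_pow, mul_inv_cancel₀ (norm_ne_zero_iff.2 hz0), one_pow, one_mul]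
  rw [hQz, mul_comm]
  exact mul_le_mul_of_nonneg_left (hmin (hunit z hz hz0)) (sq_nonneg _)

section Laplacian

variable {N : ℕ} {A : Matrix (Fin N) (Fin N) ℝ}

noncomputable def laplacianEnergy (A : Matrix (Fin N) (Fin N) ℝ) (x : Fin N → ℝ) : ℝ :=
  ∑ k, ∑ l, A k l * (x k - x l) ^ 2

theorem sLap_mulVec_apply (W : Matrix (Fin N) (Fin N) ℝ) (x : Fin N → ℝ) (k : Fin N) :
    (sLap W *ᵥ x) k = (∑ l, |W k l|) * x k - ∑ l, W k l * x l := by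
  simp only [sLap, Matrix.sub_mulVec, Pi.sub_apply, Matrix.mulVec_diagonal]
  rfl

theorem sLap_mulVec_apply_of_nonneg (hA : ∀ k l, 0 ≤ A k l) (x : Fin N → ℝ) (k : Fin N) :
    (sLap A *ᵥ x) k = ∑ l, A k l * (x k - x l) := by
  simp only [sLap_mulVec_apply, abs_of_nonneg (hA _ _), Finset.sum_mul, mul_sub,
    Finset.sum_sub_distrib]

theorem Matrix.IsSymm.sum_sum_mul_swap (hA : A.IsSymm) (f : Fin N → Fin N → ℝ) :
    ∑ k, ∑ l, A k l * f l k = ∑ k, ∑ l, A k l * f k l := by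
  rw [Finset.sum_comm]
  simp_rw [hA.apply]

theorem sum_sLap_mulVec (hA0 : ∀ k l, 0 ≤ A k l) (hA : A.IsSymm) (x : Fin N → ℝ) :
    ∑ k, (sLap A *ᵥ x) k = 0 := by
  simp_rw [sLap_mulVec_apply_of_nonneg hA0]
  have h := hA.sum_sum_mul_swap fun k l => x k - x l
  have hneg : ∑ k, ∑ l, A k l * (x l - x k) = -∑ k, ∑ l, A k l * (x k - x l) := by
    simp only [← Finset.sum_neg_distrib, ← mul_neg, neg_sub]
  linarith

theorem two_mul_sum_mul_sLap_mulVec (hA0 : ∀ k l, 0 ≤ A k l) (hA : A.IsSymm)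
    (x : Fin N → ℝ) (c : ℝ) :
    2 * ∑ k, (x k - c) * (sLap A *ᵥ x) k = laplacianEnergy A x := by
  have h := hA.sum_sum_mul_swap fun k l => (x k - c) * (x k - x l)
  calc 2 * ∑ k, (x k - c) * (sLap A *ᵥ x) k
        = ∑ k, ∑ l, A k l * ((x k - c) * (x k - x l))
          + ∑ k, ∑ l, A k l * ((x l - c) * (x l - x k)) := by
          rw [h, ← two_mul]
          simp only [sLap_mulVec_apply_of_nonneg hA0, Finset.mul_sum]
          refine Finset.sum_congr rfl fun k _ => Finset.sum_congr rfl fun l _ => by ring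
    _ = laplacianEnergy A x := by
          simp only [laplacianEnergy, ← Finset.sum_add_distrib]
          refine Finset.sum_congr rfl fun k _ => Finset.sum_congr rfl fun l _ => by ring

theorem laplacianEnergy_nonneg (hA0 : ∀ k l, 0 ≤ A k l) (x : Fin N → ℝ) :
    0 ≤ laplacianEnergy A x :=
  Finset.sum_nonneg fun k _ => Finset.sum_nonneg fun l _ => mul_nonneg (hA0 k l) (sq_nonneg _)

theorem laplacianEnergy_sub_const (x : Fin N → ℝ) (c : ℝ) :
    laplacianEnergy A (fun k => x k - c) = laplacianEnergy A x := by
  simp [laplacianEnergy]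

theorem laplacianEnergy_smul (c : ℝ) (x : Fin N → ℝ) :
    laplacianEnergy A (c • x) = c ^ 2 * laplacianEnergy A x := by
  simp only [laplacianEnergy, Finset.mul_sum, Pi.smul_apply, smul_eq_mul]
  refine Finset.sum_congr rfl fun k _ => Finset.sum_congr rfl fun l _ => by ring

theorem continuous_laplacianEnergy : Continuous (laplacianEnergy A) := by
  unfold laplacianEnergy
  fun_prop

theorem StronglyConnected.eq_of_forall_ne_zero (hSC : StronglyConnected A) {x : Fin N → ℝ}
    (hx : ∀ k l, A k l ≠ 0 → x k = x l) (i j : Fin N) : x i = x j := by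
  induction hSC i j with
  | refl => rfl
  | tail _ hbc ih => exact ih.trans (hx _ _ hbc).symm

theorem laplacianEnergy_pos (hA0 : ∀ k l, 0 ≤ A k l) (hSC : StronglyConnected A)
    {x : Fin N → ℝ} (hx : ∑ k, x k = 0) (hx0 : x ≠ 0) : 0 < laplacianEnergy A x := by
  refine (laplacianEnergy_nonneg hA0 x).lt_of_ne fun h => hx0 ?_
  have hterm : ∀ k l, A k l * (x k - x l) ^ 2 = 0 := by
    have h' := (Finset.sum_eq_zero_iff_of_nonneg fun k _ => Finset.sum_nonneg fun l _ =>
      mul_nonneg (hA0 k l) (sq_nonneg _)).1 h.symm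
    exact fun k l => (Finset.sum_eq_zero_iff_of_nonneg fun l _ =>
      mul_nonneg (hA0 k l) (sq_nonneg _)).1 (h' k (Finset.mem_univ k)) l (Finset.mem_univ l)
  have hconst := hSC.eq_of_forall_ne_zero fun k l hkl => by
    simpa [sub_eq_zero] using (mul_eq_zero.1 (hterm k l)).resolve_left hkl
  funext i
  have hN : (N : ℝ) ≠ 0 := Nat.cast_ne_zero.2 (Fin.pos i).ne'
  simp_rw [hconst _ i, Finset.sum_const, Finset.card_univ, Fintype.card_fin, nsmul_eq_mul] at hx
  simpa [hN] using hx

theorem exists_pos_mul_sum_sq_le_laplacianEnergy (hA0 : ∀ k l, 0 ≤ A k l)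
    (hSC : StronglyConnected A) :
    ∃ lam > 0, ∀ x : Fin N → ℝ, ∑ k, x k = 0 → lam * ∑ k, x k ^ 2 ≤ laplacianEnergy A x := by
  rcases N.eq_zero_or_pos with rfl | hN
  · exact ⟨1, one_pos, fun x _ => by simp [laplacianEnergy]⟩
  let V := LinearMap.ker (LinearMap.lsum ℝ (fun _ : Fin N => ℝ) ℝ fun _ => LinearMap.id)
  have hV : ∀ x, x ∈ V ↔ ∑ k, x k = 0 := fun x => by simp [V]
  obtain ⟨lam, hlam, hle⟩ := exists_pos_mul_norm_sq_le V continuous_laplacianEnergy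
    laplacianEnergy_smul fun x hx hx0 => laplacianEnergy_pos hA0 hSC ((hV x).1 hx) hx0
  refine ⟨lam / N, by positivity, fun x hx => ?_⟩
  have hsq : ∑ k, x k ^ 2 ≤ N * ‖x‖ ^ 2 := by
    simpa using Finset.sum_le_card_nsmul Finset.univ (fun k => x k ^ 2) (‖x‖ ^ 2) fun k _ =>
      sq_le_sq' (neg_le_of_abs_le (norm_le_pi_norm x k)) ((le_abs_self _).trans (norm_le_pi_norm x k))
  calc lam / N * ∑ k, x k ^ 2 ≤ lam / N * (N * ‖x‖ ^ 2) := by gcongr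
    _ = lam * ‖x‖ ^ 2 := by field_simp
    _ ≤ laplacianEnergy A x := hle x ((hV x).2 hx)

end Laplacian

section Dynamics

variable {N : ℕ} {W A : Matrix (Fin N) (Fin N) ℝ} {g : Fin N → ℝ} {κ ρ1 ρ2 T1 : ℝ}

theorem IsGauge.mul_self (hg : IsGauge W univ g) (k : Fin N) : g k * g k = 1 := by
  rcases hg.1 k (mem_univ k) with h | h <;> rw [h] <;> norm_num

theorem IsGauge.mul_sLap_mulVec (hg : IsGauge W univ g) (x : Fin N → ℝ) :
    g * (sLap W *ᵥ x) = sLap (W.map abs) *ᵥ (g * x) := by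
  have hgW : ∀ k l, g k * W k l = |W k l| * g l := fun k l => by
    rw [← hg.2 k (mem_univ k) l (mem_univ l), mul_assoc _ (g l), hg.mul_self, mul_one]
  funext k
  simp only [Pi.mul_apply, sLap_mulVec_apply, Matrix.map_apply, abs_abs, mul_sub, Finset.mul_sum]
  congr 1
  · ring
  · exact Finset.sum_congr rfl fun l _ => by rw [← mul_assoc, hgW, mul_assoc]

theorem NominalTraj.gauge {X : ℝ → Fin N → ℝ} (hX : NominalTraj W κ ρ1 ρ2 T1 X)
    (hg : IsGauge W univ g) : NominalTraj (W.map abs) κ ρ1 ρ2 T1 fun t => g * X t := by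
  refine ⟨continuous_const.mul hX.1, fun t ht hne => ?_⟩
  rw [← hg.mul_sLap_mulVec, ← mul_smul_comm]
  exact (hX.2 t ht hne).const_mul g

theorem stronglyConnected_map_abs : StronglyConnected (W.map abs) ↔ StronglyConnected W := by
  simp [StronglyConnected, Reaches]

theorem gain_nonneg (hκ : 0 ≤ κ) (T t : ℝ) : 0 ≤ gain κ T t := by
  unfold gain
  split_ifs with h
  · exact div_nonneg hκ (sub_nonneg.2 h.2.le)
  · exact le_rfl

theorem gain_of_mem_Ico {T t : ℝ} (ht : t ∈ Ico 0 T) : gain κ T t = κ / (T - t) :=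
  if_pos ht

theorem hasDerivAt_sum_of_sLap (hA0 : ∀ k l, 0 ≤ A k l) (hA : A.IsSymm) {z : ℝ → Fin N → ℝ}
    {r t : ℝ} (hz : HasDerivAt z (r • sLap A *ᵥ z t) t) :
    HasDerivAt (fun s => ∑ k, z s k) 0 t := by
  simpa [← Finset.mul_sum, sum_sLap_mulVec hA0 hA] using
    HasDerivAt.fun_sum (u := Finset.univ) fun k _ => hasDerivAt_pi.1 hz k

theorem hasDerivAt_sum_sq_sub_of_sLap (hA0 : ∀ k l, 0 ≤ A k l) (hA : A.IsSymm)
    {z : ℝ → Fin N → ℝ} {r t : ℝ} (c : ℝ) (hz : HasDerivAt z (r • sLap A *ᵥ z t) t) :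
    HasDerivAt (fun s => ∑ k, (z s k - c) ^ 2) (r * laplacianEnergy A (z t)) t := by
  refine (HasDerivAt.fun_sum fun k _ => ((hasDerivAt_pi.1 hz k).sub_const c).pow 2).congr_deriv ?_
  rw [← two_mul_sum_mul_sLap_mulVec hA0 hA (z t) c, Finset.mul_sum, Finset.mul_sum]
  refine Finset.sum_congr rfl fun k _ => ?_
  simp only [Pi.smul_apply, smul_eq_mul]
  ring

theorem sum_sub_average (x : Fin N → ℝ) : ∑ k, (x k - 1 / N * ∑ j, x j) = 0 := by
  rcases N.eq_zero_or_pos with rfl | hN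
  · simp
  · simp [Finset.sum_sub_distrib, hN.ne']

theorem NominalTraj.sum_eq_of_mem_Ico (hA0 : ∀ k l, 0 ≤ A k l) (hA : A.IsSymm)
    {z : ℝ → Fin N → ℝ} (hz : NominalTraj A κ ρ1 ρ2 T1 z) {t : ℝ} (ht : t ∈ Ico 0 T1) :
    ∑ k, z t k = ∑ k, z 0 k := by
  have hcont : Continuous fun s => ∑ k, z s k := by
    have := hz.1
    fun_prop
  refine constant_of_has_deriv_right_zero hcont.continuousOn (fun s hs => ?_) t ⟨ht.1, le_rfl⟩
  exact (hasDerivAt_sum_of_sLap hA0 hA (hz.2 s hs.1 (hs.2.trans ht.2).ne)).hasDerivWithinAt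

theorem NominalTraj.sum_sq_sub_average_le_zero (hA0 : ∀ k l, 0 ≤ A k l) (hA : A.IsSymm)
    (hSC : StronglyConnected A) (hκ : 0 < κ) (hρ1 : 0 ≤ ρ1) (hρ2 : 0 < ρ2) (hT1 : 0 < T1)
    {z : ℝ → Fin N → ℝ} (hz : NominalTraj A κ ρ1 ρ2 T1 z) :
    ∑ k, (z T1 k - 1 / N * ∑ j, z 0 j) ^ 2 ≤ 0 := by
  set c := 1 / (N : ℝ) * ∑ j, z 0 j
  have hE : Continuous fun s => ∑ k, (z s k - c) ^ 2 := by
    have := hz.1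
    fun_prop
  obtain ⟨lam, hlam, hfiedler⟩ := exists_pos_mul_sum_sq_le_laplacianEnergy hA0 hSC
  refine le_zero_of_hasDerivAt_le_neg_div_mul hT1 (p := lam * ρ2 * κ) (by positivity)
    hE.continuousOn (fun s hs => hasDerivAt_sum_sq_sub_of_sLap hA0 hA c (hz.2 s hs.1.le hs.2.ne))
    fun s hs => ?_
  have hs : s ∈ Ico 0 T1 := Ioo_subset_Ico_self hs
  have hmean : ∑ k, (z s k - c) = 0 := by
    rw [show c = 1 / N * ∑ j, z s j by rw [hz.sum_eq_of_mem_Ico hA0 hA hs]]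
    exact sum_sub_average _
  have hlamE : lam * ∑ k, (z s k - c) ^ 2 ≤ laplacianEnergy A (z s) := by
    simpa [laplacianEnergy_sub_const] using hfiedler _ hmean
  have hrate : ρ2 * (κ / (T1 - s)) ≤ ρ1 + ρ2 * gain κ T1 s := by
    rw [gain_of_mem_Ico hs]
    linarith
  calc -(ρ1 + ρ2 * gain κ T1 s) * laplacianEnergy A (z s)
      ≤ -(ρ2 * (κ / (T1 - s)) * (lam * ∑ k, (z s k - c) ^ 2)) := by
        rw [neg_mul]
        exact neg_le_neg (mul_le_mul hrate hlamE
          (mul_nonneg hlam.le (Finset.sum_nonneg fun _ _ => sq_nonneg _))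
          (add_nonneg hρ1 (mul_nonneg hρ2.le (gain_nonneg hκ.le _ _))))
    _ = -(lam * ρ2 * κ / (T1 - s)) * ∑ k, (z s k - c) ^ 2 := by ring

theorem NominalTraj.eq_average_of_nonneg (hA0 : ∀ k l, 0 ≤ A k l) (hA : A.IsSymm)
    (hSC : StronglyConnected A) (hκ : 0 < κ) (hρ1 : 0 ≤ ρ1) (hρ2 : 0 < ρ2) (hT1 : 0 < T1)
    {z : ℝ → Fin N → ℝ} (hz : NominalTraj A κ ρ1 ρ2 T1 z) {t : ℝ} (ht : T1 ≤ t) (k : Fin N) :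
    z t k = 1 / N * ∑ j, z 0 j := by
  set c := 1 / (N : ℝ) * ∑ j, z 0 j
  set E := fun s => ∑ k, (z s k - c) ^ 2
  have hE : Continuous E := by
    have := hz.1
    fun_prop
  have hanti : AntitoneOn E (Ici T1) := by
    refine antitoneOn_of_hasDerivWithinAt_nonpos (convex_Ici T1) hE.continuousOn
      (f' := fun s => -(ρ1 + ρ2 * gain κ T1 s) * laplacianEnergy A (z s)) (fun s hs => ?_)
      fun s _ => ?_
    · rw [interior_Ici] at hs
      exact (hasDerivAt_sum_sq_sub_of_sLap hA0 hA c
        (hz.2 s (hT1.trans hs).le hs.ne')).hasDerivWithinAt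
    · rw [neg_mul]
      exact neg_nonpos.2 (mul_nonneg (add_nonneg hρ1 (mul_nonneg hρ2.le (gain_nonneg hκ.le _ _)))
        (laplacianEnergy_nonneg hA0 _))
  have hEt : E t = 0 :=
    le_antisymm ((hanti self_mem_Ici ht ht).trans
      (hz.sum_sq_sub_average_le_zero hA0 hA hSC hκ hρ1 hρ2 hT1))
      (Finset.sum_nonneg fun _ _ => sq_nonneg _)
  have hk := (Finset.sum_eq_zero_iff_of_nonneg fun _ _ => sq_nonneg _).1 hEt k (Finset.mem_univ k)
  simpa [sub_eq_zero] using hk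

end Dynamics

theorem prescribed_time_signed_average_consensus_general
    {N : ℕ} (W : Matrix (Fin N) (Fin N) ℝ)
    (hsymm : W.IsSymm)
    (hSC : StronglyConnected W)
    (g : Fin N → ℝ) (hg : IsGauge W Set.univ g)
    (κ ρ1 ρ2 T1 : ℝ) (hκ : 2 < κ) (hρ1 : 0 < ρ1) (hρ2 : 0 < ρ2) (hT1 : 0 < T1)
    (X : ℝ → Fin N → ℝ) (hX : NominalTraj W κ ρ1 ρ2 T1 X) :
    ∀ t : ℝ, T1 ≤ t → ∀ k,
      X t k = g k * ((1 / (N : ℝ)) * ∑ j, g j * X 0 j) := by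
  intro t ht k
  have h := (hX.gauge hg).eq_average_of_nonneg (by intro k l; exact abs_nonneg _) (hsymm.map _)
    (stronglyConnected_map_abs.2 hSC) (by linarith) hρ1.le hρ2 hT1 ht k
  simp only [Pi.mul_apply] at h
  rw [← h, ← mul_assoc, hg.mul_self, one_mul]

theorem prescribed_time_signed_average_consensus
    {N : ℕ} (hN : 2 ≤ N) (W : Matrix (Fin N) (Fin N) ℝ)
    (hdiag : ∀ k, W k k = 0)
    (hsymm : W.IsSymm)
    (hSC : StronglyConnected W)
    (g : Fin N → ℝ) (hg : IsGauge W Set.univ g)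
    (κ ρ1 ρ2 T1 : ℝ) (hκ : 2 < κ) (hρ1 : 0 < ρ1) (hρ2 : 0 < ρ2) (hT1 : 0 < T1)
    (X : ℝ → Fin N → ℝ) (hX : NominalTraj W κ ρ1 ρ2 T1 X) :
    ∀ t : ℝ, T1 ≤ t → ∀ k,
      X t k = g k * ((1 / (N : ℝ)) * ∑ j, g j * X 0 j) :=
  prescribed_time_signed_average_consensus_general W hsymm hSC g hg κ ρ1 ρ2 T1 hκ hρ1 hρ2 hT1 X hX
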